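/- arXiv:1406.3391 — 7 statements merged into one kernel-verified Lean document; each statement's English description precedes it below -/
import Mathlib

section
/- With the hypotheses and notation of the column lemma setup, for every x ∈ F one has Φ(x; σ, τ) = Φ(x; τ, σ); that is, Σ_{j=1}^{n} (∏_{i ≠ j} ((σ_i − σ_j) − x)/(σ_i − σ_j)) · (∏_{i=1}^{n} ((τ_i + σ_j) − x)/(τ_i + σ_j)) = Σ_{j=1}^{n} (∏_{i ≠ j} ((τ_i − τ_j) − x)/(τ_i − τ_j)) · (∏_{i=1}^{n} ((σ_i + τ_j) − x)/(σ_i + τ_j)). -/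
open Finset Polynomial

private lemma col_aux_monic {F : Type*} [Field F] {n : ℕ} (s : Finset (Fin n)) (g : Fin n → F) :
    (∏ i ∈ s, (X - C (g i))).Monic :=
  monic_prod_of_monic _ _ fun _ _ => monic_X_sub_C _

private lemma col_aux_natDegree {F : Type*} [Field F] {n : ℕ} (s : Finset (Fin n)) (g : Fin n → F) :
    (∏ i ∈ s, (X - C (g i))).natDegree = s.card := by
  rw [natDegree_prod_of_monic _ _ fun _ _ => monic_X_sub_C _]
  simp

private lemma col_aux_eval {F : Type*} [Field F] {n : ℕ} (s : Finset (Fin n)) (g : Fin n → F)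
    (y : F) : eval y (∏ i ∈ s, (X - C (g i))) = ∏ i ∈ s, (y - g i) := by
  simp [eval_prod]

private lemma col_aux_nextCoeff {F : Type*} [Field F] {n : ℕ} (s : Finset (Fin n))
    (g : Fin n → F) : (∏ i ∈ s, (X - C (g i))).nextCoeff = -∑ i ∈ s, g i := by
  rw [Monic.nextCoeff_prod _ _ fun _ _ => monic_X_sub_C _]
  simp [nextCoeff_X_sub_C]

/-- evaluation of the residue sum at a pole point `u k`. -/
private lemma col_aux_sum_eval {F : Type*} [Field F] {n : ℕ} (c u w : Fin n → F) (k : Fin n) :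
    eval (u k) (∑ j : Fin n, C (c j) *
        ((∏ i ∈ Finset.univ.erase j, (X - C (u i))) * ∏ i : Fin n, (X - C (w i)))) =
      c k * ((∏ i ∈ Finset.univ.erase k, (u k - u i)) * ∏ i : Fin n, (u k - w i)) := by
  rw [eval_finset_sum, Finset.sum_eq_single k]
  · simp [eval_prod]
  · intro j _ hj
    simp only [eval_mul, eval_C, eval_prod, eval_sub, eval_X]
    rw [Finset.prod_eq_zero (Finset.mem_erase.mpr ⟨hj.symm, Finset.mem_univ k⟩) (sub_self (u k))]
    ring
  · intro h; exact absurd (Finset.mem_univ k) h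

/-- evaluation of the residue sum at a point `w k` (not a pole of this group): vanishes. -/
private lemma col_aux_sum_eval_zero {F : Type*} [Field F] {n : ℕ} (c u w : Fin n → F)
    (k : Fin n) :
    eval (w k) (∑ j : Fin n, C (c j) *
        ((∏ i ∈ Finset.univ.erase j, (X - C (u i))) * ∏ i : Fin n, (X - C (w i)))) = 0 := by
  rw [eval_finset_sum]
  apply Finset.sum_eq_zero
  intro j _
  simp only [eval_mul, eval_C, eval_prod, eval_sub, eval_X]
  rw [Finset.prod_eq_zero (Finset.mem_univ k) (sub_self (w k))]
  ring

/-- **The column lemma (Lemma 5.3).**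
Let `F` be a field of characteristic zero, `n ≥ 1`, and `σ, τ : Fin n → F` with the `σ i`
pairwise distinct, the `τ i` pairwise distinct, and `σ j + τ i ≠ 0` for all `i, j`.  Then
`Φ(x; σ, τ) = Φ(x; τ, σ)` for every `x ∈ F`, where
`Φ(x; σ, τ) = Σ_j (∏_{i ≠ j} ((σ i − σ j) − x)/(σ i − σ j)) · (∏_i ((τ i + σ j) − x)/(τ i + σ j))`. -/
theorem column_lemma {F : Type*} [Field F] [CharZero F] {n : ℕ} (hn : 1 ≤ n)
    (σ τ : Fin n → F) (hσ : Function.Injective σ) (hτ : Function.Injective τ)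
    (hστ : ∀ i j : Fin n, σ j + τ i ≠ 0) (x : F) :
    (∑ j : Fin n, (∏ i ∈ Finset.univ.erase j, ((σ i - σ j) - x) / (σ i - σ j)) *
        (∏ i : Fin n, ((τ i + σ j) - x) / (τ i + σ j))) =
    (∑ j : Fin n, (∏ i ∈ Finset.univ.erase j, ((τ i - τ j) - x) / (τ i - τ j)) *
        (∏ i : Fin n, ((σ i + τ j) - x) / (σ i + τ j))) := by
  classical
  have hσ' : ∀ j : Fin n, ∀ i ∈ Finset.univ.erase j, σ i - σ j ≠ 0 := by
    intro j i hi
    exact sub_ne_zero.mpr (fun h => (Finset.mem_erase.mp hi).1 (hσ h))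
  have hτ' : ∀ j : Fin n, ∀ i ∈ Finset.univ.erase j, τ i - τ j ≠ 0 := by
    intro j i hi
    exact sub_ne_zero.mpr (fun h => (Finset.mem_erase.mp hi).1 (hτ h))
  have hστ1 : ∀ i j : Fin n, τ i + σ j ≠ 0 := fun i j h => hστ i j (by rw [add_comm]; exact h)
  have hστ2 : ∀ i j : Fin n, σ i + τ j ≠ 0 := fun i j => hστ j i
  rcases eq_or_ne x 0 with rfl | hx
  · have e1 : ∀ j : Fin n, (∏ i ∈ Finset.univ.erase j, ((σ i - σ j) - 0)/(σ i - σ j)) *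
        (∏ i : Fin n, ((τ i + σ j) - 0)/(τ i + σ j)) = 1 := by
      intro j
      rw [Finset.prod_eq_one (fun i hi => by rw [sub_zero, div_self (hσ' j i hi)]),
          Finset.prod_eq_one (fun i _ => by rw [sub_zero, div_self (hστ1 i j)]), one_mul]
    have e2 : ∀ j : Fin n, (∏ i ∈ Finset.univ.erase j, ((τ i - τ j) - 0)/(τ i - τ j)) *
        (∏ i : Fin n, ((σ i + τ j) - 0)/(σ i + τ j)) = 1 := by
      intro j
      rw [Finset.prod_eq_one (fun i hi => by rw [sub_zero, div_self (hτ' j i hi)]),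
          Finset.prod_eq_one (fun i _ => by rw [sub_zero, div_self (hστ2 i j)]), one_mul]
    rw [Finset.sum_congr rfl fun j _ => e1 j, Finset.sum_congr rfl fun j _ => e2 j]
  · -- main case x ≠ 0
    set φ : Fin n → F := fun j => (∏ i ∈ Finset.univ.erase j, ((σ i - σ j) - x) / (σ i - σ j)) *
        (∏ i : Fin n, ((τ i + σ j) - x) / (τ i + σ j)) with hφ
    set ψ : Fin n → F := fun j => (∏ i ∈ Finset.univ.erase j, ((τ i - τ j) - x) / (τ i - τ j)) *
        (∏ i : Fin n, ((σ i + τ j) - x) / (σ i + τ j)) with hψ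
    clear_value φ ψ
    suffices h : (-x) * ∑ j, φ j = (-x) * ∑ j, ψ j from
      mul_left_cancel₀ (neg_ne_zero.mpr hx) h
    -- the polynomial L
    have hL0 : (∑ j : Fin n, C (-x * φ j) *
          ((∏ i ∈ Finset.univ.erase j, (X - C (σ i))) * ∏ i : Fin n, (X - C (-τ i)))) -
        (∑ j : Fin n, C (-x * ψ j) *
          ((∏ i ∈ Finset.univ.erase j, (X - C (-τ i))) * ∏ i : Fin n, (X - C (σ i)))) +
        ((∏ i : Fin n, (X - C (σ i - x))) * (∏ i : Fin n, (X - C (x - τ i))) -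
          (∏ i : Fin n, (X - C (σ i))) * (∏ i : Fin n, (X - C (-τ i)))) = 0 := by
      have hSdeg : ∀ (j : Fin n) (u w : Fin n → F),
          ((∏ i ∈ Finset.univ.erase j, (X - C (u i))) * ∏ i : Fin n, (X - C (w i))).natDegree
            = 2 * n - 1 := by
        intro j u w
        rw [Monic.natDegree_mul (col_aux_monic _ _) (col_aux_monic _ _), col_aux_natDegree,
          col_aux_natDegree, Finset.card_erase_of_mem (Finset.mem_univ j), Finset.card_univ,
          Fintype.card_fin]
        omega
      have hdeg2 : ∀ u w : Fin n → F,
          ((∏ i : Fin n, (X - C (u i))) * ∏ i : Fin n, (X - C (w i))).natDegree = 2 * n := by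
        intro u w
        rw [Monic.natDegree_mul (col_aux_monic _ _) (col_aux_monic _ _), col_aux_natDegree,
          col_aux_natDegree, Finset.card_univ, Fintype.card_fin]
        omega
      refine eq_zero_of_natDegree_lt_card_of_eval_eq_zero _
        (f := Sum.elim σ fun k => -τ k) ?_ ?_ ?_
      · rintro (a | a) (b | b) h <;> simp only [Sum.elim_inl, Sum.elim_inr] at h
        · exact congrArg Sum.inl (hσ h)
        · exact absurd (by rw [h]; ring) (hστ b a)
        · exact absurd (by rw [← h]; ring) (hστ a b)
        · exact congrArg Sum.inr (hτ (neg_injective h))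
      · rintro (k | k) <;> simp only [Sum.elim_inl, Sum.elim_inr]
        · -- evaluation at σ k
          rw [eval_add, eval_sub, eval_sub, eval_mul, eval_mul,
            col_aux_sum_eval (fun j => -x * φ j) σ (fun i => -τ i) k,
            col_aux_sum_eval_zero (fun j => -x * ψ j) (fun i => -τ i) σ k,
            col_aux_eval, col_aux_eval, col_aux_eval, col_aux_eval]
          have z1 : ∏ i : Fin n, (σ k - σ i) = 0 :=
            Finset.prod_eq_zero (Finset.mem_univ k) (sub_self _)
          have c1 : ∏ i ∈ Finset.univ.erase k,
                (((σ i - σ k) - x) / (σ i - σ k) * (σ k - σ i))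
              = ∏ i ∈ Finset.univ.erase k, (σ k - (σ i - x)) :=
            Finset.prod_congr rfl fun i hi => by
              rw [div_mul_eq_mul_div, div_eq_iff (hσ' k i hi)]; ring
          have c2 : ∏ i : Fin n, (((τ i + σ k) - x) / (τ i + σ k) * (σ k - (-τ i)))
              = ∏ i : Fin n, (σ k - (x - τ i)) :=
            Finset.prod_congr rfl fun i _ => by
              rw [div_mul_eq_mul_div, div_eq_iff (hστ1 i k)]; ring
          have key1 : φ k * ((∏ i ∈ Finset.univ.erase k, (σ k - σ i)) *
                ∏ i : Fin n, (σ k - (-τ i)))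
              = (∏ i ∈ Finset.univ.erase k, (σ k - (σ i - x))) *
                ∏ i : Fin n, (σ k - (x - τ i)) := by
            rw [hφ, mul_mul_mul_comm, ← Finset.prod_mul_distrib, ← Finset.prod_mul_distrib,
              c1, c2]
          have keyF : (∏ i : Fin n, (σ k - (σ i - x)))
              = x * ∏ i ∈ Finset.univ.erase k, (σ k - (σ i - x)) := by
            rw [← Finset.mul_prod_erase _ _ (Finset.mem_univ k), sub_sub_cancel]
          linear_combination (-x) * key1 + (∏ i : Fin n, (σ k - (x - τ i))) * keyF
            - (∏ i : Fin n, (σ k - (-τ i))) * z1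
        · -- evaluation at -τ k
          rw [eval_add, eval_sub, eval_sub, eval_mul, eval_mul,
            col_aux_sum_eval (fun j => -x * ψ j) (fun i => -τ i) σ k,
            col_aux_sum_eval_zero (fun j => -x * φ j) σ (fun i => -τ i) k,
            col_aux_eval, col_aux_eval, col_aux_eval, col_aux_eval]
          have z2 : ∏ i : Fin n, (-τ k - (-τ i)) = 0 :=
            Finset.prod_eq_zero (Finset.mem_univ k) (sub_self _)
          have c1 : ∏ i ∈ Finset.univ.erase k,
                (((τ i - τ k) - x) / (τ i - τ k) * (-τ k - (-τ i)))
              = ∏ i ∈ Finset.univ.erase k, (-τ k - (x - τ i)) :=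
            Finset.prod_congr rfl fun i hi => by
              rw [div_mul_eq_mul_div, div_eq_iff (hτ' k i hi)]; ring
          have c2 : ∏ i : Fin n, (((σ i + τ k) - x) / (σ i + τ k) * (-τ k - σ i))
              = ∏ i : Fin n, (-τ k - (σ i - x)) :=
            Finset.prod_congr rfl fun i _ => by
              rw [div_mul_eq_mul_div, div_eq_iff (hστ2 i k)]; ring
          have key2 : ψ k * ((∏ i ∈ Finset.univ.erase k, (-τ k - (-τ i))) *
                ∏ i : Fin n, (-τ k - σ i))
              = (∏ i ∈ Finset.univ.erase k, (-τ k - (x - τ i))) *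
                ∏ i : Fin n, (-τ k - (σ i - x)) := by
            rw [hψ, mul_mul_mul_comm, ← Finset.prod_mul_distrib, ← Finset.prod_mul_distrib,
              c1, c2]
          have keyG : (∏ i : Fin n, (-τ k - (x - τ i)))
              = (-x) * ∏ i ∈ Finset.univ.erase k, (-τ k - (x - τ i)) := by
            rw [← Finset.mul_prod_erase _ _ (Finset.mem_univ k)]
            congr 1; ring
          linear_combination x * key2 + (∏ i : Fin n, (-τ k - (σ i - x))) * keyG
            - (∏ i : Fin n, (-τ k - σ i)) * z2
      · -- degree bound
        have b1 : (∑ j : Fin n, C (-x * φ j) *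
            ((∏ i ∈ Finset.univ.erase j, (X - C (σ i))) *
              ∏ i : Fin n, (X - C (-τ i)))).natDegree ≤ 2 * n - 1 :=
          natDegree_sum_le_of_forall_le _ _ fun j _ =>
            (natDegree_C_mul_le _ _).trans (le_of_eq (hSdeg j _ _))
        have b2 : (∑ j : Fin n, C (-x * ψ j) *
            ((∏ i ∈ Finset.univ.erase j, (X - C (-τ i))) *
              ∏ i : Fin n, (X - C (σ i)))).natDegree ≤ 2 * n - 1 :=
          natDegree_sum_le_of_forall_le _ _ fun j _ =>
            (natDegree_C_mul_le _ _).trans (le_of_eq (hSdeg j _ _))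
        have hmAB : ((∏ i : Fin n, (X - C (σ i - x))) *
            ∏ i : Fin n, (X - C (x - τ i))).Monic :=
          (col_aux_monic _ _).mul (col_aux_monic _ _)
        have hmA0B0 : ((∏ i : Fin n, (X - C (σ i))) *
            ∏ i : Fin n, (X - C (-τ i))).Monic :=
          (col_aux_monic _ _).mul (col_aux_monic _ _)
        have hlt : ((∏ i : Fin n, (X - C (σ i - x))) * (∏ i : Fin n, (X - C (x - τ i))) -
            (∏ i : Fin n, (X - C (σ i))) * (∏ i : Fin n, (X - C (-τ i)))).degree
              < ((2 * n : ℕ) : WithBot ℕ) := by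
          have hdd : ((∏ i : Fin n, (X - C (σ i - x))) *
              ∏ i : Fin n, (X - C (x - τ i))).degree
                = ((∏ i : Fin n, (X - C (σ i))) * ∏ i : Fin n, (X - C (-τ i))).degree := by
            rw [degree_eq_natDegree hmAB.ne_zero, degree_eq_natDegree hmA0B0.ne_zero,
              hdeg2, hdeg2]
          have hlc : ((∏ i : Fin n, (X - C (σ i - x))) *
              ∏ i : Fin n, (X - C (x - τ i))).leadingCoeff
                = ((∏ i : Fin n, (X - C (σ i))) *
              ∏ i : Fin n, (X - C (-τ i))).leadingCoeff := by
            rw [hmAB.leadingCoeff, hmA0B0.leadingCoeff]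
          have h := degree_sub_lt hdd hmAB.ne_zero hlc
          rwa [degree_eq_natDegree hmAB.ne_zero, hdeg2] at h
        have b3 : ((∏ i : Fin n, (X - C (σ i - x))) * (∏ i : Fin n, (X - C (x - τ i))) -
            (∏ i : Fin n, (X - C (σ i))) * (∏ i : Fin n, (X - C (-τ i)))).natDegree
              ≤ 2 * n - 1 := by
          rcases eq_or_ne ((∏ i : Fin n, (X - C (σ i - x))) *
              (∏ i : Fin n, (X - C (x - τ i))) -
              (∏ i : Fin n, (X - C (σ i))) * (∏ i : Fin n, (X - C (-τ i)))) 0 with h | h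
          · rw [h, natDegree_zero]; omega
          · have := (natDegree_lt_iff_degree_lt h).mpr hlt
            omega
        have := le_trans (natDegree_add_le _ _)
          (max_le (le_trans (natDegree_sub_le _ _) (max_le b1 b2)) b3)
        rw [Fintype.card_sum, Fintype.card_fin]
        omega
    -- coefficient extraction at degree 2n - 1
    have hSdeg2 : ∀ (j : Fin n) (u w : Fin n → F),
        ((∏ i ∈ Finset.univ.erase j, (X - C (u i))) * ∏ i : Fin n, (X - C (w i))).natDegree
          = 2 * n - 1 := by
      intro j u w
      rw [Monic.natDegree_mul (col_aux_monic _ _) (col_aux_monic _ _), col_aux_natDegree,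
        col_aux_natDegree, Finset.card_erase_of_mem (Finset.mem_univ j), Finset.card_univ,
        Fintype.card_fin]
      omega
    have hdeg2 : ∀ u w : Fin n → F,
        ((∏ i : Fin n, (X - C (u i))) * ∏ i : Fin n, (X - C (w i))).natDegree = 2 * n := by
      intro u w
      rw [Monic.natDegree_mul (col_aux_monic _ _) (col_aux_monic _ _), col_aux_natDegree,
        col_aux_natDegree, Finset.card_univ, Fintype.card_fin]
      omega
    have cS : ∀ (j : Fin n) (u w : Fin n → F),
        ((∏ i ∈ Finset.univ.erase j, (X - C (u i))) * ∏ i : Fin n, (X - C (w i))).coeff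
          (2 * n - 1) = 1 := by
      intro j u w
      have h := ((col_aux_monic (Finset.univ.erase j) u).mul (col_aux_monic Finset.univ w)).coeff_natDegree
      rwa [hSdeg2 j u w] at h
    have cAB : ∀ u w : Fin n → F,
        ((∏ i : Fin n, (X - C (u i))) * ∏ i : Fin n, (X - C (w i))).coeff (2 * n - 1)
          = -(∑ i : Fin n, u i) + -(∑ i : Fin n, w i) := by
      intro u w
      have hpos : 0 < ((∏ i : Fin n, (X - C (u i))) * ∏ i : Fin n, (X - C (w i))).natDegree := by
        rw [hdeg2]; omega
      have h := nextCoeff_of_natDegree_pos hpos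
      rw [hdeg2] at h
      rw [← h, Monic.nextCoeff_mul (col_aux_monic _ _) (col_aux_monic _ _),
        col_aux_nextCoeff, col_aux_nextCoeff]
    have hc := congrArg (fun p : Polynomial F => p.coeff (2 * n - 1)) hL0
    simp only [coeff_add, coeff_sub, finset_sum_coeff, coeff_C_mul, coeff_zero, cS, cAB,
      mul_one] at hc
    have s1 : ∑ i : Fin n, (σ i - x) = (∑ i : Fin n, σ i) - n * x := by
      rw [Finset.sum_sub_distrib, Finset.sum_const, Finset.card_univ, Fintype.card_fin,
        nsmul_eq_mul]
    have s2 : ∑ i : Fin n, (x - τ i) = n * x - ∑ i : Fin n, τ i := by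
      rw [Finset.sum_sub_distrib, Finset.sum_const, Finset.card_univ, Fintype.card_fin,
        nsmul_eq_mul]
    have s3 : ∑ i : Fin n, (-τ i) = -∑ i : Fin n, τ i := by
      rw [Finset.sum_neg_distrib]
    rw [Finset.mul_sum, Finset.mul_sum]
    linear_combination hc + s1 + s2 - s3
end

section
/- Let F be a field, x, a, b ∈ F, and j ∈ ℕ with a + b = x − (j − 1) in F (for j ≥ 1; equivalently a + b + j − 1 = x). Assume a + i ≠ 0 and b + i ≠ 0 in F for all natural numbers 0 ≤ i < j. Then ⟨x; a⟩_j · ⟨x; b⟩_j = 1. -/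
open Finset

/-- The Pochhammer-type product `⟨x; a⟩_j = ∏_{i=0}^{j−1} (a + i − x)/(a + i)`. -/
noncomputable def ab {F : Type*} [Field F] (x a : F) (j : ℕ) : F :=
  ∏ i ∈ Finset.range j, (a + (i : F) - x) / (a + (i : F))

/-! The denominator of `⟨x; a⟩_j` is the rising factorial of `a`, and its numerator is `(-1)^j`
times the falling factorial of `x - a`, i.e. the rising factorial of `x - a - j + 1`. When
`a + b = x - (j - 1)` the latter is `b`, so `⟨x; a⟩_j` and `⟨x; b⟩_j` are `(-1)^j` times mutually
inverse ratios of rising factorials. -/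

open Polynomial

theorem ascPochhammer_eval_eq_prod_range {R : Type*} [CommSemiring R] (n : ℕ) (r : R) :
    (ascPochhammer R n).eval r = ∏ i ∈ range n, (r + i) := by
  induction n with
  | zero => simp
  | succ n ih => simp [ascPochhammer_succ_right, ih, prod_range_succ]

theorem ascPochhammer_eval_ne_zero {R : Type*} [CommSemiring R] [NoZeroDivisors R] [Nontrivial R]
    {n : ℕ} {r : R} (h : ∀ i < n, r + i ≠ 0) : (ascPochhammer R n).eval r ≠ 0 := by
  rw [ascPochhammer_eval_eq_prod_range]
  exact prod_ne_zero_iff.mpr fun i hi => h i (mem_range.mp hi)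

theorem prod_range_add_natCast_sub_eq_ascPochhammer_eval {R : Type*} [CommRing R]
    (a x : R) (n : ℕ) :
    ∏ i ∈ range n, (a + i - x) = (-1) ^ n * (ascPochhammer R n).eval (x - a - n + 1) := by
  rw [← descPochhammer_eval_eq_ascPochhammer, descPochhammer_eval_eq_prod_range]
  calc ∏ i ∈ range n, (a + i - x) = ∏ i ∈ range n, -(x - a - i) :=
        prod_congr rfl fun _ _ => by ring
    _ = (-1) ^ n * ∏ i ∈ range n, (x - a - i) := by rw [prod_neg, card_range]

theorem ab_eq_ascPochhammer_eval_div {F : Type*} [Field F] (x a : F) (j : ℕ) :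
    ab x a j =
      (-1) ^ j * (ascPochhammer F j).eval (x - a - j + 1) / (ascPochhammer F j).eval a := by
  rw [ab, prod_div_distrib, prod_range_add_natCast_sub_eq_ascPochhammer_eval,
    ← ascPochhammer_eval_eq_prod_range]

/-- **Cancellation identity for `⟨x; ·⟩_j` (equation (5.2)).**
If `a + b = x − (j − 1)` and all denominators `a + i`, `b + i` (`0 ≤ i < j`) are nonzero,
then `⟨x; a⟩_j · ⟨x; b⟩_j = 1`. -/
theorem ab_cancel {F : Type*} [Field F] (x a b : F) (j : ℕ)
    (hab : a + b = x - ((j : F) - 1))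
    (ha : ∀ i : ℕ, i < j → a + (i : F) ≠ 0)
    (hb : ∀ i : ℕ, i < j → b + (i : F) ≠ 0) :
    ab x a j * ab x b j = 1 := by
  have hPa := ascPochhammer_eval_ne_zero ha
  have hPb := ascPochhammer_eval_ne_zero hb
  have hb' : x - a - j + 1 = b := by linear_combination -hab
  have ha' : x - b - j + 1 = a := by linear_combination -hab
  rw [ab_eq_ascPochhammer_eval_div, ab_eq_ascPochhammer_eval_div, hb', ha']
  field_simp
  rw [← pow_mul, mul_comm, pow_mul, neg_one_sq, one_pow]
end

section
/- With the hypotheses and notation of the row lemma setup, let k be a natural number with 1 ≤ k ≤ n and set x_k = σ_1 + τ_1 + (k − 1). Then for every natural number t with 0 ≤ t < k one has φ^n_t(x_k; σ, τ) = 0. -/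
open Finset

/-- `rowA n s a b t1 t2 x` is the quantity `A^n_s(j; σ, τ)(x)` of the row-lemma setup, where
`a = σ_j`, `b = σ_{3−j}`, and `(t1, t2) = (τ_1, τ_2)`:
`∏_{k=1}^{n−s} ((−k) − x)/(−k) · ((b − a + (k−1) − s) − x)/(b − a + (k−1) − s) ·
((t1 + a + (k−1) + s) − x)/(t1 + a + (k−1) + s) · ((t2 + a + (k−1) + s) − x)/(t2 + a + (k−1) + s)`. -/
noncomputable def rowA {F : Type*} [Field F] (n s : ℕ) (a b t1 t2 x : F) : F :=
  ∏ k ∈ Finset.Icc 1 (n - s),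
    (((-(k : F)) - x) / (-(k : F))) *
    (((b - a + ((k : F) - 1) - (s : F)) - x) / (b - a + ((k : F) - 1) - (s : F))) *
    (((t1 + a + ((k : F) - 1) + (s : F)) - x) / (t1 + a + ((k : F) - 1) + (s : F))) *
    (((t2 + a + ((k : F) - 1) + (s : F)) - x) / (t2 + a + ((k : F) - 1) + (s : F)))

/-- `φ^n_t(x; σ, τ) = A^n_t(1; σ, τ)(x) · A^n_{n−t}(2; σ, τ)(x)` with `σ = (s1, s2)`,
`τ = (t1, t2)`. -/
noncomputable def rowPhi {F : Type*} [Field F] (n t : ℕ) (s1 s2 t1 t2 x : F) : F :=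
  rowA n t s1 s2 t1 t2 x * rowA n (n - t) s2 s1 t1 t2 x

/-- `Φ_n(x; σ, τ) = Σ_{t=0}^{n} φ^n_t(x; σ, τ)`. -/
noncomputable def rowPhiSum {F : Type*} [Field F] (n : ℕ) (s1 s2 t1 t2 x : F) : F :=
  ∑ t ∈ Finset.range (n + 1), rowPhi n t s1 s2 t1 t2 x

/-- **Vanishing step in the proof of the row lemma.**
Under the row-lemma hypotheses, for `1 ≤ k ≤ n` and `x_k = σ_1 + τ_1 + (k − 1)`, one has
`φ^n_t(x_k; σ, τ) = 0` for every `t < k`. -/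
theorem row_lemma_vanishing {F : Type*} [Field F] [CharZero F] (n : ℕ) (s1 s2 t1 t2 : F)
    (h1 : ∀ m : ℕ, m < n →
      (s1 + t1 + (m : F) ≠ 0 ∧ s1 + t2 + (m : F) ≠ 0 ∧
       s2 + t1 + (m : F) ≠ 0 ∧ s2 + t2 + (m : F) ≠ 0))
    (h2 : ∀ m : ℤ, -(n : ℤ) ≤ m → m ≤ (n : ℤ) - 1 → s1 - s2 + (m : F) ≠ 0)
    (h3 : ∀ m : ℤ, -(n : ℤ) ≤ m → m ≤ (n : ℤ) - 1 → t1 - t2 + (m : F) ≠ 0)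
    (k : ℕ) (hk1 : 1 ≤ k) (hkn : k ≤ n) (t : ℕ) (htk : t < k) :
    rowPhi n t s1 s2 t1 t2 (s1 + t1 + ((k : F) - 1)) = 0 := by
  unfold rowPhi rowA
  apply mul_eq_zero_of_left
  apply Finset.prod_eq_zero (i := k - t) (Finset.mem_Icc.mpr ⟨by omega, by omega⟩)
  have h0 : t1 + s1 + (((k - t : ℕ) : F) - 1) + (t : F) - (s1 + t1 + ((k : F) - 1)) = 0 := by
    push_cast [Nat.cast_sub htk.le]; ring
  rw [h0, zero_div, mul_zero, zero_mul]
end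

section
/- With the hypotheses and notation of the extended row lemma setup, let k, t be natural numbers with 1 ≤ k ≤ t ≤ n and set x_k = σ_1 + τ_1 + (k − 1), σ' = (σ_1 + k, σ_2), τ' = (τ_1 + k, τ_2). Then φ^n_t(x_k; σ, τ) · ⟨x_k; τ_1 + σ_1 + n⟩_k = φ^{n−k}_{t−k}(x_k; σ', τ') · ⟨x_k; τ_2 + σ_2 + n − k⟩_k. -/
open Finset

/-!
Every factor of `A^n_s` is a ratio `(a + i − x)/(a + i)` (the first one after the substitution
`x ↦ −x`), so both sides of the identity are products of blocks `⟨x; a⟩_m`, and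
`⟨x; a⟩_{p+q} = ⟨x; a⟩_p · ⟨x; a + p⟩_q`. Passing from `(n, t, σ, τ)` to `(n − k, t − k, σ', τ')`
shifts one block of `A^n_t(1)` and shortens the four blocks of `A^n_{n−t}(2)` by `k`. After
splitting off the length-`k` pieces, everything matches except two pairs of length-`k` blocks,
and both pairs multiply to `1` at `x = x_k`: in `⟨x; a⟩_k · ⟨−x; a − x⟩_k` the factors cancel
one by one, and in `⟨x; a⟩_k · ⟨x; b⟩_k` with `a + b + (k − 1) = x` they cancel after the factors
of one block are taken in reverse order.
-/

section ab

variable {F : Type*} [Field F]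

theorem ab_add (x a : F) (p q : ℕ) : ab x a (p + q) = ab x a p * ab x (a + p) q := by
  simp only [ab, prod_range_add, Nat.cast_add, add_assoc]

theorem ab_mul_ab_comm (x a : F) (p q : ℕ) :
    ab x a p * ab x (a + p) q = ab x a q * ab x (a + q) p := by
  rw [← ab_add, ← ab_add, Nat.add_comm]

theorem ab_mul_ab_neg_sub_eq_one {x a : F} {k : ℕ} (ha : ∀ i < k, a + i ≠ 0)
    (hax : ∀ i < k, a - x + i ≠ 0) : ab x a k * ab (-x) (a - x) k = 1 := by
  rw [ab, ab, ← prod_mul_distrib]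
  refine prod_eq_one fun i hi => ?_
  have h₁ := ha i (mem_range.1 hi)
  have h₂ := hax i (mem_range.1 hi)
  rw [div_mul_div_comm, div_eq_one_iff_eq (mul_ne_zero h₁ h₂)]
  ring

theorem prod_range_add_sub_eq_neg_one_pow_mul {x a b : F} {k : ℕ}
    (h : a + b + ((k : F) - 1) = x) :
    ∏ i ∈ range k, (a + i - x) = (-1) ^ k * ∏ i ∈ range k, (b + i) := by
  rw [← prod_range_reflect, show (-1 : F) ^ k = ∏ _i ∈ range k, (-1 : F) by simp,
    ← prod_mul_distrib]
  refine prod_congr rfl fun i hi => ?_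
  have hik := mem_range.1 hi
  rw [Nat.cast_sub (by omega), Nat.cast_sub (by omega), ← h]
  push_cast
  ring

theorem ab_mul_ab_eq_one_of_add_eq {x a b : F} {k : ℕ} (h : a + b + ((k : F) - 1) = x)
    (ha : ∀ i < k, a + i ≠ 0) (hb : ∀ i < k, b + i ≠ 0) : ab x a k * ab x b k = 1 := by
  have hpa : ∏ i ∈ range k, (a + i) ≠ 0 := prod_ne_zero_iff.2 fun i hi => ha i (mem_range.1 hi)
  have hpb : ∏ i ∈ range k, (b + i) ≠ 0 := prod_ne_zero_iff.2 fun i hi => hb i (mem_range.1 hi)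
  rw [ab, ab, prod_div_distrib, prod_div_distrib, prod_range_add_sub_eq_neg_one_pow_mul h,
    prod_range_add_sub_eq_neg_one_pow_mul (b := a) (by rw [← h]; ring)]
  field_simp
  rw [← pow_mul, mul_comm, pow_mul, neg_one_sq, one_pow]

end ab

theorem rowA_eq_ab {F : Type*} [Field F] (n s : ℕ) (a b c d x : F) :
    rowA n s a b c d x = ab (-x) 1 (n - s) * ab x (b - a - s) (n - s) *
      ab x (c + a + s) (n - s) * ab x (d + a + s) (n - s) := by
  simp only [rowA, ab, ← prod_mul_distrib]
  rw [← Ico_add_one_right_eq_Icc, prod_Ico_eq_prod_range, Nat.add_sub_cancel]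
  refine prod_congr rfl fun i _ => ?_
  push_cast
  rw [← neg_div_neg_eq (-(1 + (i : F)) - x)]
  ring_nf

section rowA

variable {F : Type*} [Field F] {a b c d x : F} {n t k : ℕ}

theorem rowA_mul_ab_eq_rowA_shift_mul_ab (hkt : k ≤ t) (htn : t ≤ n) :
    rowA n t a b c d x * ab x (c + a + n) k =
      rowA (n - k) (t - k) (a + k) b (c + k) d x * ab x (c + a + t) k := by
  obtain ⟨m, rfl⟩ := Nat.exists_eq_add_of_le htn
  obtain ⟨j, rfl⟩ := Nat.exists_eq_add_of_le hkt
  rw [rowA_eq_ab, rowA_eq_ab, show k + j + m - (k + j) = m by omega,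
    show k + j + m - k - (k + j - k) = m by omega, Nat.add_sub_cancel_left,
    show c + a + ↑(k + j + m) = c + a + ↑(k + j) + m by push_cast; ring,
    show b - (a + k) - j = b - a - ↑(k + j) by push_cast; ring,
    show c + k + (a + k) + j = c + a + ↑(k + j) + k by push_cast; ring,
    show d + (a + k) + j = d + a + ↑(k + j) by push_cast; ring]
  linear_combination ab (-x) 1 m * ab x (b - a - ↑(k + j)) m * ab x (d + a + ↑(k + j)) m *
    ab_mul_ab_comm x (c + a + ↑(k + j)) m k

theorem rowA_compl_eq_rowA_shift_mul (hkt : k ≤ t) (htn : t ≤ n) :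
    rowA n (n - t) a b c d x =
      rowA (n - k) (n - t) a (b + k) (c + k) d x * ab (-x) (1 + ↑(t - k)) k *
        ab x (b - a - ↑(n - t)) k * ab x (c + a + ↑(n - t)) k * ab x (d + a + ↑(n - k)) k := by
  obtain ⟨m, rfl⟩ := Nat.exists_eq_add_of_le htn
  obtain ⟨j, rfl⟩ := Nat.exists_eq_add_of_le hkt
  rw [rowA_eq_ab, rowA_eq_ab, show k + j + m - (k + j) = m by omega,
    Nat.add_sub_cancel, show k + j + m - k - m = j by omega, show k + j + m - k = j + m by omega,
    Nat.add_sub_cancel_left, ab_add x (b - a - m) k j, ab_add x (c + a + m) k j, add_comm k j,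
    ab_add (-x) 1 j k, ab_add x (d + a + m) j k,
    show b - a - m + k = b + k - a - m by ring, show c + a + m + k = c + k + a + m by ring,
    show d + a + m + j = d + a + ↑(j + m) by push_cast; ring, add_comm (1 : F)]
  ring

end rowA

theorem row_lemma_recursion_general {F : Type*} [Field F] [CharZero F] (n : ℕ) (s1 s2 t1 t2 : F)
    (h1 : ∀ m : ℕ, m < 2 * n →
      (s1 + t1 + (m : F) ≠ 0 ∧ s1 + t2 + (m : F) ≠ 0 ∧
       s2 + t1 + (m : F) ≠ 0 ∧ s2 + t2 + (m : F) ≠ 0))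
    (h2 : ∀ m : ℤ, -(n : ℤ) ≤ m → m ≤ (n : ℤ) - 1 → s1 - s2 + (m : F) ≠ 0)
    (k t : ℕ) (hkt : k ≤ t) (htn : t ≤ n) :
    rowPhi n t s1 s2 t1 t2 (s1 + t1 + ((k : F) - 1)) *
        ab (s1 + t1 + ((k : F) - 1)) (t1 + s1 + (n : F)) k =
      rowPhi (n - k) (t - k) (s1 + (k : F)) s2 (t1 + (k : F)) t2 (s1 + t1 + ((k : F) - 1)) *
        ab (s1 + t1 + ((k : F) - 1)) (t2 + s2 + (n : F) - (k : F)) k := by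
  set x := s1 + t1 + ((k : F) - 1)
  have hkn := hkt.trans htn
  have hα : ab x (t1 + s1 + t) k * ab (-x) (1 + ↑(t - k)) k = 1 := by
    rw [show (1 : F) + ↑(t - k) = t1 + s1 + t - x by push_cast [x, Nat.cast_sub hkt]; ring]
    exact ab_mul_ab_neg_sub_eq_one
      (fun i _ h => (h1 (t + i) (by omega)).1 (by push_cast; linear_combination h))
      (fun i _ h => Nat.cast_add_one_ne_zero (R := F) (t - k + i)
        (by push_cast [x, Nat.cast_sub hkt]; linear_combination h))
  have hβ : ab x (s1 - s2 - ↑(n - t)) k * ab x (t1 + s2 + ↑(n - t)) k = 1 :=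
    ab_mul_ab_eq_one_of_add_eq (by ring)
      (fun i _ h => h2 (i - ↑(n - t)) (by omega) (by omega) (by push_cast; linear_combination h))
      (fun i _ h => (h1 (n - t + i) (by omega)).2.2.1 (by push_cast; linear_combination h))
  rw [rowPhi, rowPhi, mul_right_comm, rowA_mul_ab_eq_rowA_shift_mul_ab hkt htn,
    rowA_compl_eq_rowA_shift_mul hkt htn, show n - k - (t - k) = n - t by omega,
    show t2 + s2 + (n : F) - k = t2 + s2 + ↑(n - k) by push_cast [Nat.cast_sub hkn]; ring]
  linear_combination rowA (n - k) (t - k) (s1 + k) s2 (t1 + k) t2 x *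
    rowA (n - k) (n - t) s2 (s1 + k) (t1 + k) t2 x * ab x (t2 + s2 + ↑(n - k)) k *
    (ab x (s1 - s2 - ↑(n - t)) k * ab x (t1 + s2 + ↑(n - t)) k * hα + hβ)

/-- **Recursion step (equation (5.6)) in the proof of the row lemma.**
Under the extended row-lemma hypotheses, for `1 ≤ k ≤ t ≤ n`,
`x_k = σ_1 + τ_1 + (k − 1)`, `σ' = (σ_1 + k, σ_2)`, `τ' = (τ_1 + k, τ_2)`:
`φ^n_t(x_k; σ, τ) · ⟨x_k; τ_1 + σ_1 + n⟩_k
  = φ^{n−k}_{t−k}(x_k; σ', τ') · ⟨x_k; τ_2 + σ_2 + n − k⟩_k`. -/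
theorem row_lemma_recursion {F : Type*} [Field F] [CharZero F] (n : ℕ) (s1 s2 t1 t2 : F)
    (h1 : ∀ m : ℕ, m < 2 * n →
      (s1 + t1 + (m : F) ≠ 0 ∧ s1 + t2 + (m : F) ≠ 0 ∧
       s2 + t1 + (m : F) ≠ 0 ∧ s2 + t2 + (m : F) ≠ 0))
    (h2 : ∀ m : ℤ, -(n : ℤ) ≤ m → m ≤ (n : ℤ) - 1 → s1 - s2 + (m : F) ≠ 0)
    (h3 : ∀ m : ℤ, -(n : ℤ) ≤ m → m ≤ (n : ℤ) - 1 → t1 - t2 + (m : F) ≠ 0)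
    (k t : ℕ) (hk1 : 1 ≤ k) (hkt : k ≤ t) (htn : t ≤ n) :
    rowPhi n t s1 s2 t1 t2 (s1 + t1 + ((k : F) - 1)) *
        ab (s1 + t1 + ((k : F) - 1)) (t1 + s1 + (n : F)) k =
      rowPhi (n - k) (t - k) (s1 + (k : F)) s2 (t1 + (k : F)) t2 (s1 + t1 + ((k : F) - 1)) *
        ab (s1 + t1 + ((k : F) - 1)) (t2 + s2 + (n : F) - (k : F)) k :=
  row_lemma_recursion_general n s1 s2 t1 t2 h1 h2 k t hkt htn
end

section
/- With the hypotheses and notation of the extended row lemma setup, let k, t be natural numbers with 1 ≤ k ≤ t ≤ n and set x_k = σ_1 + τ_1 + (k − 1), σ' = (σ_1 + k, σ_2), τ' = (τ_1 + k, τ_2). Then A^n_t(1; σ, τ)(x_k) · ⟨x_k; τ_1 + σ_1 + n⟩_k = A^{n−k}_{t−k}(1; σ', τ')(x_k) · ⟨x_k; τ_1 + σ_1 + t⟩_k. -/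
open Finset

lemma key_shift {F : Type*} [Field F] (g : ℕ → F) (n t k : ℕ) (hkt : k ≤ t) (htn : t ≤ n) :
    (∏ m ∈ Finset.range (n - t), g (t + m)) * ∏ i ∈ Finset.range k, g (n + i)
      = (∏ m ∈ Finset.range (n - t), g (t + k + m)) * ∏ i ∈ Finset.range k, g (t + i) := by
  have e1 : ∏ m ∈ Finset.range (n - t), g (t + m) = ∏ m ∈ Finset.Ico t n, g m := by
    rw [Finset.prod_Ico_eq_prod_range]
  have e2 : ∏ i ∈ Finset.range k, g (n + i) = ∏ i ∈ Finset.Ico n (n + k), g i := by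
    rw [Finset.prod_Ico_eq_prod_range]; simp
  have e3 : ∏ m ∈ Finset.range (n - t), g (t + k + m) = ∏ m ∈ Finset.Ico (t + k) (n + k), g m := by
    rw [Finset.prod_Ico_eq_prod_range]
    have h : n + k - (t + k) = n - t := by omega
    rw [h]
  have e4 : ∏ i ∈ Finset.range k, g (t + i) = ∏ i ∈ Finset.Ico t (t + k), g i := by
    rw [Finset.prod_Ico_eq_prod_range]; simp
  rw [e1, e2, e3, e4, Finset.prod_Ico_consecutive g htn (by omega), mul_comm,
    Finset.prod_Ico_consecutive g (by omega : t ≤ t + k) (by omega)]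


/-- **First-factor recursion (equation (5.7)) in the proof of the row lemma.**
Under the extended row-lemma hypotheses, for `1 ≤ k ≤ t ≤ n`,
`x_k = σ_1 + τ_1 + (k − 1)`, `σ' = (σ_1 + k, σ_2)`, `τ' = (τ_1 + k, τ_2)`:
`A^n_t(1; σ, τ)(x_k) · ⟨x_k; τ_1 + σ_1 + n⟩_k
  = A^{n−k}_{t−k}(1; σ', τ')(x_k) · ⟨x_k; τ_1 + σ_1 + t⟩_k`. -/
theorem row_lemma_first_factor {F : Type*} [Field F] [CharZero F] (n : ℕ) (s1 s2 t1 t2 : F)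
    (h1 : ∀ m : ℕ, m < 2 * n →
      (s1 + t1 + (m : F) ≠ 0 ∧ s1 + t2 + (m : F) ≠ 0 ∧
       s2 + t1 + (m : F) ≠ 0 ∧ s2 + t2 + (m : F) ≠ 0))
    (h2 : ∀ m : ℤ, -(n : ℤ) ≤ m → m ≤ (n : ℤ) - 1 → s1 - s2 + (m : F) ≠ 0)
    (h3 : ∀ m : ℤ, -(n : ℤ) ≤ m → m ≤ (n : ℤ) - 1 → t1 - t2 + (m : F) ≠ 0)
    (k t : ℕ) (hk1 : 1 ≤ k) (hkt : k ≤ t) (htn : t ≤ n) :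
    rowA n t s1 s2 t1 t2 (s1 + t1 + ((k : F) - 1)) *
        ab (s1 + t1 + ((k : F) - 1)) (t1 + s1 + (n : F)) k =
      rowA (n - k) (t - k) (s1 + (k : F)) s2 (t1 + (k : F)) t2 (s1 + t1 + ((k : F) - 1)) *
        ab (s1 + t1 + ((k : F) - 1)) (t1 + s1 + (t : F)) k := by
  set x : F := s1 + t1 + ((k : F) - 1) with hx
  set g : ℕ → F := fun m => (t1 + s1 + (m : F) - x) / (t1 + s1 + (m : F)) with hg
  set C : F := ∏ i ∈ Finset.range (n - t),
      ((-((i : F) + 1) - x) / (-((i : F) + 1))) *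
      ((s2 - s1 + (i : F) - (t : F) - x) / (s2 - s1 + (i : F) - (t : F))) *
      ((t2 + s1 + (i : F) + (t : F) - x) / (t2 + s1 + (i : F) + (t : F))) with hC
  have hIcc : ∀ N : ℕ, ∀ f : ℕ → F, ∏ j ∈ Finset.Icc 1 N, f j = ∏ i ∈ Finset.range N, f (1 + i) := by
    intro N f
    rw [← Finset.Ico_add_one_right_eq_Icc, Finset.prod_Ico_eq_prod_range]
    simp
  have eL : rowA n t s1 s2 t1 t2 x = C * ∏ m ∈ Finset.range (n - t), g (t + m) := by
    rw [rowA, hIcc, hC, ← Finset.prod_mul_distrib]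
    refine Finset.prod_congr rfl fun i _ => ?_
    simp only [hg]
    push_cast
    ring
  have htk : ((t - k : ℕ) : F) = (t : F) - (k : F) := by
    push_cast [Nat.cast_sub hkt]; ring
  have hnk : n - k - (t - k) = n - t := by omega
  have eR : rowA (n - k) (t - k) (s1 + (k : F)) s2 (t1 + (k : F)) t2 x
      = C * ∏ m ∈ Finset.range (n - t), g (t + k + m) := by
    rw [rowA, hnk, hIcc, hC, ← Finset.prod_mul_distrib]
    refine Finset.prod_congr rfl fun i _ => ?_
    simp only [hg, htk]
    push_cast
    ring
  have eabn : ab x (t1 + s1 + (n : F)) k = ∏ i ∈ Finset.range k, g (n + i) := by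
    rw [ab]
    refine Finset.prod_congr rfl fun i _ => ?_
    simp only [hg]
    push_cast
    ring
  have eabt : ab x (t1 + s1 + (t : F)) k = ∏ i ∈ Finset.range k, g (t + i) := by
    rw [ab]
    refine Finset.prod_congr rfl fun i _ => ?_
    simp only [hg]
    push_cast
    ring
  rw [eL, eR, eabn, eabt, mul_assoc, mul_assoc, key_shift g n t k hkt htn]
end

section
/- With the hypotheses and notation of the extended row lemma setup, let k, t be natural numbers with 1 ≤ k ≤ t ≤ n and set x_k = σ_1 + τ_1 + (k − 1), σ' = (σ_1 + k, σ_2), τ' = (τ_1 + k, τ_2). Then A^n_{n−t}(2; σ, τ)(x_k) · ⟨x_k; τ_1 + σ_1 + t⟩_k = A^{n−k}_{n−t}(2; σ', τ')(x_k) · ⟨x_k; τ_2 + σ_2 + n − k⟩_k. -/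
open Finset

def myG1 {F : Type*} [Field F] (x : F) (j : ℕ) : F := ((-(j:F)) - x) / (-(j:F))
def myG2 {F : Type*} [Field F] (a b s x : F) (j : ℕ) : F :=
  ((b - a + ((j : F) - 1) - s) - x) / (b - a + ((j : F) - 1) - s)
def myG3 {F : Type*} [Field F] (t1 a s x : F) (j : ℕ) : F :=
  ((t1 + a + ((j : F) - 1) + s) - x) / (t1 + a + ((j : F) - 1) + s)

lemma rowA_eq_G {F : Type*} [Field F] (n s : ℕ) (a b t1 t2 x : F) :
    rowA n s a b t1 t2 x = ∏ j ∈ Icc 1 (n - s),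
      myG1 x j * myG2 a b (s:F) x j * myG3 t1 a (s:F) x j * myG3 t2 a (s:F) x j := rfl

lemma prod_Icc_one {F : Type*} [Field F] (m : ℕ) (f : ℕ → F) :
    ∏ j ∈ Icc 1 m, f j = ∏ i ∈ range m, f (1 + i) := by
  rw [← Finset.Ico_add_one_right_eq_Icc, Finset.prod_Ico_eq_prod_range]
  simp

/-- **Second-factor recursion (equation (5.10)) in the proof of the row lemma.**
Under the extended row-lemma hypotheses, for `1 ≤ k ≤ t ≤ n`,
`x_k = σ_1 + τ_1 + (k − 1)`, `σ' = (σ_1 + k, σ_2)`, `τ' = (τ_1 + k, τ_2)`: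
`A^n_{n−t}(2; σ, τ)(x_k) · ⟨x_k; τ_1 + σ_1 + t⟩_k
  = A^{n−k}_{n−t}(2; σ', τ')(x_k) · ⟨x_k; τ_2 + σ_2 + n − k⟩_k`. -/
theorem row_lemma_second_factor {F : Type*} [Field F] [CharZero F] (n : ℕ) (s1 s2 t1 t2 : F)
    (h1 : ∀ m : ℕ, m < 2 * n →
      (s1 + t1 + (m : F) ≠ 0 ∧ s1 + t2 + (m : F) ≠ 0 ∧
       s2 + t1 + (m : F) ≠ 0 ∧ s2 + t2 + (m : F) ≠ 0))
    (h2 : ∀ m : ℤ, -(n : ℤ) ≤ m → m ≤ (n : ℤ) - 1 → s1 - s2 + (m : F) ≠ 0)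
    (h3 : ∀ m : ℤ, -(n : ℤ) ≤ m → m ≤ (n : ℤ) - 1 → t1 - t2 + (m : F) ≠ 0)
    (k t : ℕ) (hk1 : 1 ≤ k) (hkt : k ≤ t) (htn : t ≤ n) :
    rowA n (n - t) s2 s1 t1 t2 (s1 + t1 + ((k : F) - 1)) *
        ab (s1 + t1 + ((k : F) - 1)) (t1 + s1 + (t : F)) k =
      rowA (n - k) (n - t) s2 (s1 + (k : F)) (t1 + (k : F)) t2 (s1 + t1 + ((k : F) - 1)) *
        ab (s1 + t1 + ((k : F) - 1)) (t2 + s2 + (n : F) - (k : F)) k := by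
  have hkn : k ≤ n := hkt.trans htn
  have htt : n - (n - t) = t := Nat.sub_sub_self htn
  have htk : (n - k) - (n - t) = t - k := by omega
  set x : F := s1 + t1 + ((k : F) - 1) with hx
  set c : F := ((n - t : ℕ) : F) with hc
  have hcnt : c = (n : F) - t := by rw [hc, Nat.cast_sub htn]
  -- rewrite both rowA's as range products
  have eL : rowA n (n - t) s2 s1 t1 t2 x = ∏ i ∈ range t,
      (myG1 x (1+i) * myG2 s2 s1 c x (1+i) * myG3 t1 s2 c x (1+i) * myG3 t2 s2 c x (1+i)) := by
    rw [rowA_eq_G, htt, prod_Icc_one]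
  have eR : rowA (n - k) (n - t) s2 (s1 + (k:F)) (t1 + (k:F)) t2 x = ∏ i ∈ range (t - k),
      (myG1 x (1+i) * myG2 s2 (s1 + (k:F)) c x (1+i) * myG3 (t1 + (k:F)) s2 c x (1+i)
        * myG3 t2 s2 c x (1+i)) := by
    rw [rowA_eq_G, htk, prod_Icc_one]
  -- generic splitting
  have key : ∀ g1 g2 g3 g4 : ℕ → F,
      (∏ i ∈ range t, (g1 i * g2 i * g3 i * g4 i)) =
      (∏ i ∈ range (t - k), (g1 i * g2 (k + i) * g3 (k + i) * g4 i)) *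
      (∏ i ∈ range k, (g1 (t - k + i) * g4 (t - k + i))) *
      (∏ i ∈ range k, (g2 i * g3 i)) := by
    intro g1 g2 g3 g4
    simp only [Finset.prod_mul_distrib]
    rw [show range t = range ((t - k) + k) by rw [Nat.sub_add_cancel hkt]]
    rw [Finset.prod_range_add g1, Finset.prod_range_add g4]
    rw [show (t - k) + k = k + (t - k) from Nat.add_comm _ _]
    rw [Finset.prod_range_add g2, Finset.prod_range_add g3]
    ring
  rw [eL, eR,
    key (fun i => myG1 x (1+i)) (fun i => myG2 s2 s1 c x (1+i))
      (fun i => myG3 t1 s2 c x (1+i)) (fun i => myG3 t2 s2 c x (1+i))]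
  -- the shifted middle product equals the RHS product
  have hshift : (∏ i ∈ range (t - k),
      (myG1 x (1+i) * myG2 s2 s1 c x (1+(k+i)) * myG3 t1 s2 c x (1+(k+i)) * myG3 t2 s2 c x (1+i)))
      = ∏ i ∈ range (t - k),
      (myG1 x (1+i) * myG2 s2 (s1 + (k:F)) c x (1+i) * myG3 (t1 + (k:F)) s2 c x (1+i)
        * myG3 t2 s2 c x (1+i)) := by
    apply Finset.prod_congr rfl
    intro i _
    simp only [myG1, myG2, myG3]
    push_cast
    ring
  have hfin : (∏ i ∈ range k, (myG1 x (1+(t-k+i)) * myG3 t2 s2 c x (1+(t-k+i)))) *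
      (∏ i ∈ range k, (myG2 s2 s1 c x (1+i) * myG3 t1 s2 c x (1+i))) *
      ab x (t1 + s1 + (t:F)) k = ab x (t2 + s2 + (n:F) - (k:F)) k := by
    have hA : (∏ i ∈ range k, myG1 x (1+(t-k+i))) * ab x (t1 + s1 + (t:F)) k = 1 := by
      rw [ab, ← Finset.prod_mul_distrib]
      apply Finset.prod_eq_one
      intro i hi
      rw [Finset.mem_range] at hi
      have hcast : ((1 + (t - k + i) : ℕ) : F) = (t:F) - k + 1 + i := by
        rw [show 1 + (t - k + i) = (t + i + 1) - k from by omega, Nat.cast_sub (by omega)]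
        push_cast; ring
      have hne2' : t1 + s1 + (t:F) + i ≠ 0 := by
        have hm := (h1 (t + i) (by omega)).1
        push_cast at hm
        intro h0; exact hm (by linear_combination h0)
      have hne1 : ((t:F) - k + 1 + i) ≠ 0 := by
        have h := Nat.cast_ne_zero (R := F).2 (show 1 + (t - k + i) ≠ 0 by omega)
        rwa [hcast] at h
      simp only [myG1]
      rw [hcast]
      have e1 : -((t:F) - (k:F) + 1 + (i:F)) - x = -(t1 + s1 + (t:F) + (i:F)) := by
        rw [hx]; ring
      have e2 : t1 + s1 + (t:F) + (i:F) - x = (t:F) - (k:F) + 1 + (i:F) := by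
        rw [hx]; ring
      rw [e1, e2, neg_div_neg_eq, div_mul_div_comm,
        mul_comm ((t:F) - (k:F) + 1 + (i:F)) (t1 + s1 + (t:F) + (i:F))]
      exact div_self (mul_ne_zero hne2' hne1)
    have hB : (∏ i ∈ range k, myG3 t2 s2 c x (1+(t-k+i)))
        = ab x (t2 + s2 + (n:F) - (k:F)) k := by
      rw [ab]
      apply Finset.prod_congr rfl
      intro i hi
      rw [Finset.mem_range] at hi
      have hcast : ((1 + (t - k + i) : ℕ) : F) = (t:F) - k + 1 + i := by
        rw [show 1 + (t - k + i) = (t + i + 1) - k from by omega, Nat.cast_sub (by omega)]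
        push_cast; ring
      rw [myG3, hcast, hcnt]
      ring
    have hC : (∏ i ∈ range k, (myG2 s2 s1 c x (1+i) * myG3 t1 s2 c x (1+i))) = 1 := by
      rw [Finset.prod_mul_distrib,
        ← Finset.prod_range_reflect (fun i => myG3 t1 s2 c x (1+i)) k,
        ← Finset.prod_mul_distrib]
      apply Finset.prod_eq_one
      intro i hi
      rw [Finset.mem_range] at hi
      have hcast : ((1 + (k - 1 - i) : ℕ) : F) = (k:F) - i := by
        rw [show 1 + (k - 1 - i) = k - i from by omega, Nat.cast_sub (by omega)]
      have hd2 : s1 - s2 + (((1+i:ℕ):F) - 1) - c ≠ 0 := by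
        have hm := h2 ((i:ℤ) + t - n) (by omega) (by omega)
        push_cast at hm
        rw [hcnt]; push_cast
        intro h0; exact hm (by linear_combination h0)
      have hd3 : t1 + s2 + (((1+(k-1-i):ℕ):F) - 1) + c ≠ 0 := by
        have hm := (h1 (n - t + (k - 1 - i)) (by omega)).2.2.1
        have hm2 : ((n - t + (k-1-i) : ℕ) : F) = (n:F) - t + ((k:F) - 1 - i) := by
          rw [show n - t + (k-1-i) = (n + k) - (t + i + 1) from by omega,
            Nat.cast_sub (by omega)]
          push_cast; ring
        rw [hm2] at hm
        rw [hcast, hcnt]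
        intro h0; exact hm (by linear_combination h0)
      simp only [myG2, myG3]
      have hsum : (s1 - s2 + (((1+i:ℕ):F) - 1) - c) + (t1 + s2 + (((1+(k-1-i):ℕ):F) - 1) + c)
          = x := by
        rw [hcast, hcnt, hx]; push_cast; ring
      have e2 : s1 - s2 + (((1+i:ℕ):F) - 1) - c - x
          = -(t1 + s2 + (((1+(k-1-i):ℕ):F) - 1) + c) := by linear_combination hsum
      have e3 : t1 + s2 + (((1+(k-1-i):ℕ):F) - 1) + c - x
          = -(s1 - s2 + (((1+i:ℕ):F) - 1) - c) := by linear_combination hsum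
      rw [e2, e3, div_mul_div_comm, neg_mul_neg,
        mul_comm (t1 + s2 + (((1+(k-1-i):ℕ):F) - 1) + c) (s1 - s2 + (((1+i:ℕ):F) - 1) - c)]
      exact div_self (mul_ne_zero hd2 hd3)
    calc (∏ i ∈ range k, (myG1 x (1+(t-k+i)) * myG3 t2 s2 c x (1+(t-k+i)))) *
        (∏ i ∈ range k, (myG2 s2 s1 c x (1+i) * myG3 t1 s2 c x (1+i))) *
        ab x (t1 + s1 + (t:F)) k
        = ((∏ i ∈ range k, myG1 x (1+(t-k+i))) * ab x (t1 + s1 + (t:F)) k) *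
          (∏ i ∈ range k, (myG2 s2 s1 c x (1+i) * myG3 t1 s2 c x (1+i))) *
          (∏ i ∈ range k, myG3 t2 s2 c x (1+(t-k+i))) := by
          rw [Finset.prod_mul_distrib]; ring
      _ = ab x (t2 + s2 + (n:F) - (k:F)) k := by rw [hA, hB, hC]; ring
  rw [hshift]
  beta_reduce
  linear_combination (∏ i ∈ range (t - k),
      (myG1 x (1+i) * myG2 s2 (s1 + (k:F)) c x (1+i) * myG3 (t1 + (k:F)) s2 c x (1+i)
        * myG3 t2 s2 c x (1+i))) * hfin
end

section
/- Let λ, μ be partitions with at most 3 parts with μ ⊆ λ such that the skew shape λ/μ is a horizontal strip (each column contains at most one cell of λ/μ), and let ν be a partition with ν_3 = 0. If there exists a Littlewood–Richardson tableau T of shape λ/μ and weight ν such that some cell in row 2 of T has entry 2 and some cell in row 3 of T has entry 1, then there exist at least two distinct Littlewood–Richardson tableaux of shape λ/μ and weight ν. -/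
open Finset

/-- The cells of the skew shape `λ/μ` for partitions with at most 3 parts (rows indexed by
`Fin 3`, columns 1-indexed): pairs `(i, j)` with `μ_i < j ≤ λ_i`. -/
def skewCells (lam mu : Fin 3 → ℕ) : Finset (Fin 3 × ℕ) :=
  (Finset.univ ×ˢ Finset.range (lam 0 + lam 1 + lam 2 + 1)).filter
    fun p => mu p.1 < p.2 ∧ p.2 ≤ lam p.1

/-- The multiplicity prescribed by the weight `ν` (a partition with at most 3 parts) for the
entry `v ≥ 1`: `ν_v` for `v ∈ {1,2,3}` and `0` for `v > 3`. -/
def weightVal (nu : Fin 3 → ℕ) (v : ℕ) : ℕ :=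
  if v = 1 then nu 0 else if v = 2 then nu 1 else if v = 3 then nu 2 else 0

/-- `T : Fin 3 → ℕ → ℕ` is a Littlewood–Richardson tableau of shape `λ/μ` and weight `ν`:
`T` is `0` outside the skew shape and positive on it, rows weakly increase, columns strictly
increase, each entry `v ≥ 1` occurs `weightVal ν v` times, and every initial segment of the
(right-to-left, top-to-bottom) reading word contains at least as many `v − 1`'s as `v`'s for
every `v ≥ 2` (Yamanouchi condition); such an initial segment consists of the cells in rows
`< i` together with the cells in row `i` of column `≥ j`, for some `i, j`. -/
def IsLR (lam mu nu : Fin 3 → ℕ) (T : Fin 3 → ℕ → ℕ) : Prop :=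
  (∀ (i : Fin 3) (j : ℕ), ¬(mu i < j ∧ j ≤ lam i) → T i j = 0) ∧
  (∀ (i : Fin 3) (j : ℕ), mu i < j → j ≤ lam i → 1 ≤ T i j) ∧
  (∀ (i : Fin 3) (j j' : ℕ), mu i < j → j ≤ lam i → mu i < j' → j' ≤ lam i →
    j ≤ j' → T i j ≤ T i j') ∧
  (∀ (i i' : Fin 3) (j : ℕ), mu i < j → j ≤ lam i → mu i' < j → j ≤ lam i' →
    i < i' → T i j < T i' j) ∧
  (∀ v : ℕ, 1 ≤ v →
    ((skewCells lam mu).filter fun p => T p.1 p.2 = v).card = weightVal nu v) ∧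
  (∀ (i : Fin 3) (j : ℕ) (v : ℕ), 2 ≤ v →
    ((skewCells lam mu).filter
        fun p => (p.1 < i ∨ (p.1 = i ∧ j ≤ p.2)) ∧ T p.1 p.2 = v).card ≤
      ((skewCells lam mu).filter
        fun p => (p.1 < i ∨ (p.1 = i ∧ j ≤ p.2)) ∧ T p.1 p.2 = v - 1).card)

lemma le_sum3 (lam : Fin 3 → ℕ) (i : Fin 3) : lam i ≤ lam 0 + lam 1 + lam 2 := by
  have h : i = 0 ∨ i = 1 ∨ i = 2 := by omega
  rcases h with h | h | h <;> subst h <;> omega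

lemma mem_skewCells {lam mu : Fin 3 → ℕ} {p : Fin 3 × ℕ} :
    p ∈ skewCells lam mu ↔ mu p.1 < p.2 ∧ p.2 ≤ lam p.1 := by
  simp only [skewCells, Finset.mem_filter, Finset.mem_product, Finset.mem_range,
    Finset.mem_univ, true_and]
  constructor
  · tauto
  · intro h
    exact ⟨by have := le_sum3 lam p.1; omega, h⟩

lemma swap_card {α : Type*} [DecidableEq α] (s : Finset α) (f g : α → ℕ) (x y : α)
    (hx : x ∈ s) (hy : y ∈ s) (hgx : g x = f y) (hgy : g y = f x)
    (hfg : ∀ a, a ≠ x → a ≠ y → g a = f a) (v : ℕ) :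
    (s.filter fun a => g a = v).card = (s.filter fun a => f a = v).card := by
  set sw : α → α := fun a => if a = x then y else if a = y then x else a with hsw
  have hswsw : ∀ a, sw (sw a) = a := by
    intro a
    by_cases h1 : a = x
    · by_cases h2 : x = y <;> simp [hsw, h1, h2]
    · by_cases h2 : a = y
      · simp [hsw, h1, h2]
      · simp [hsw, h1, h2]
  have hkey : ∀ a, g a = f (sw a) := by
    intro a
    by_cases h1 : a = x
    · simp [hsw, h1, hgx]
    · by_cases h2 : a = y
      · have h3 : ¬ y = x := fun h => h1 (h2.trans h)
        simp [hsw, h1, h2, h3, hgy]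
      · simp [hsw, h1, h2, hfg a h1 h2]
  have hmem : ∀ a, a ∈ s → sw a ∈ s := by
    intro a ha
    by_cases h1 : a = x
    · simpa [hsw, h1] using hy
    · by_cases h2 : a = y
      · have h3 : ¬ y = x := fun h => h1 (h2.trans h)
        simpa [hsw, h1, h2, h3] using hx
      · simpa [hsw, h1, h2] using ha
  apply Finset.card_bij' (fun a _ => sw a) (fun a _ => sw a)
  · intro a ha
    simp only [Finset.mem_filter] at ha ⊢
    exact ⟨hmem a ha.1, by rw [← hkey a]; exact ha.2⟩
  · intro a ha
    simp only [Finset.mem_filter] at ha ⊢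
    refine ⟨hmem a ha.1, ?_⟩
    rw [hkey (sw a), hswsw a]; exact ha.2
  · intro a _; exact hswsw a
  · intro a _; exact hswsw a

/-- **Non-uniqueness for horizontal strips with a swappable pair.**
Let `λ/μ` be a horizontal strip (at most 3 rows, no two cells in a column) and `ν` a partition
with `ν_3 = 0`.  If some LR tableau of shape `λ/μ` and weight `ν` has a `2` in row 2 and a `1`
in row 3, then there are at least two distinct LR tableaux of that shape and weight. -/
theorem horizontal_strip_not_unique (lam mu nu : Fin 3 → ℕ)
    (hlam : Antitone lam) (hmu : Antitone mu) (hnu : Antitone nu)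
    (hsub : ∀ i, mu i ≤ lam i)
    (hstrip : ∀ (i i' : Fin 3) (j : ℕ), mu i < j → j ≤ lam i → mu i' < j → j ≤ lam i' → i = i')
    (hnu3 : nu 2 = 0)
    (T : Fin 3 → ℕ → ℕ) (hT : IsLR lam mu nu T)
    (hrow2 : ∃ j : ℕ, mu 1 < j ∧ j ≤ lam 1 ∧ T 1 j = 2)
    (hrow3 : ∃ j : ℕ, mu 2 < j ∧ j ≤ lam 2 ∧ T 2 j = 1) :
    ∃ T1 T2 : Fin 3 → ℕ → ℕ, IsLR lam mu nu T1 ∧ IsLR lam mu nu T2 ∧ T1 ≠ T2 := by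
  obtain ⟨hzero, hpos, hrow, hcol, hwt, hyam⟩ := hT
  -- all values on the shape are 1 or 2
  have hval : ∀ (i : Fin 3) (j : ℕ), mu i < j → j ≤ lam i → T i j = 1 ∨ T i j = 2 := by
    intro i j h1 h2
    by_contra h
    push_neg at h
    have hv1 : 1 ≤ T i j := hpos i j h1 h2
    have hv3 : 3 ≤ T i j := by omega
    have hmem : (i, j) ∈ (skewCells lam mu).filter (fun p => T p.1 p.2 = T i j) :=
      Finset.mem_filter.2 ⟨mem_skewCells.2 ⟨h1, h2⟩, rfl⟩
    have hcard := Finset.card_pos.2 ⟨(i, j), hmem⟩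
    rw [hwt (T i j) (by omega)] at hcard
    unfold weightVal at hcard
    split_ifs at hcard <;> omega
  -- leftmost 2 in row 1
  have hfind2 : ∃ j : ℕ, mu 1 < j ∧ j ≤ lam 1 ∧ T 1 j = 2 := hrow2
  set j2 := Nat.find hfind2 with hj2def
  obtain ⟨hj2a, hj2b, hj2v⟩ := Nat.find_spec hfind2
  rw [← hj2def] at hj2a hj2b hj2v
  have hj2min : ∀ j, j < j2 → ¬(mu 1 < j ∧ j ≤ lam 1 ∧ T 1 j = 2) :=
    fun j hj => Nat.find_min hfind2 hj
  have hR1 : ∀ j, mu 1 < j → j ≤ lam 1 → (if j < j2 then T 1 j = 1 else T 1 j = 2) := by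
    intro j h1 h2
    split_ifs with hj
    · rcases hval 1 j h1 h2 with h | h
      · exact h
      · exact absurd ⟨h1, h2, h⟩ (hj2min j hj)
    · have hmono := hrow 1 j2 j hj2a hj2b h1 h2 (by omega)
      rcases hval 1 j h1 h2 with h | h
      · omega
      · exact h
  -- rightmost 1 in row 2
  obtain ⟨J, hJ1, hJ2, hJ3⟩ := hrow3
  set j3 := Nat.findGreatest (fun j => mu 2 < j ∧ T 2 j = 1) (lam 2) with hj3def
  have hj3spec : mu 2 < j3 ∧ T 2 j3 = 1 := by
    rw [hj3def]
    exact Nat.findGreatest_spec (P := fun j => mu 2 < j ∧ T 2 j = 1) hJ2 ⟨hJ1, hJ3⟩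
  obtain ⟨hj3a, hj3v⟩ := hj3spec
  have hj3b : j3 ≤ lam 2 := Nat.findGreatest_le _
  have hj3max : ∀ k, j3 < k → k ≤ lam 2 → ¬(mu 2 < k ∧ T 2 k = 1) := by
    rw [hj3def]
    exact fun k hk hk' =>
      Nat.findGreatest_is_greatest (P := fun j => mu 2 < j ∧ T 2 j = 1) hk hk'
  have hR2 : ∀ j, mu 2 < j → j ≤ lam 2 → (if j ≤ j3 then T 2 j = 1 else T 2 j = 2) := by
    intro j h1 h2
    split_ifs with hj
    · have hmono := hrow 2 j j3 h1 h2 hj3a hj3b hj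
      have := hpos 2 j h1 h2
      omega
    · rcases hval 2 j h1 h2 with h | h
      · exact absurd ⟨h1, h⟩ (hj3max j (by omega) h2)
      · exact h
  -- the modified tableau
  set S : Fin 3 → ℕ → ℕ := fun i j =>
    if i = 1 ∧ j = j2 then 1 else if i = 2 ∧ j = j3 then 2 else T i j with hSdef
  have hne12 : ((1 : Fin 3) = 2) = False := by simp
  have hSx : S 1 j2 = 1 := by simp [hSdef]
  have hSy : S 2 j3 = 2 := by simp [hSdef]
  have hSother : ∀ (i : Fin 3) (j : ℕ), ¬(i = 1 ∧ j = j2) → ¬(i = 2 ∧ j = j3) →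
      S i j = T i j := by
    intro i j h1 h2
    simp only [hSdef]
    rw [if_neg h1, if_neg h2]
  have hSval : ∀ (i : Fin 3) (j : ℕ), mu i < j → j ≤ lam i → S i j = 1 ∨ S i j = 2 := by
    intro i j h1 h2
    by_cases hc1 : i = 1 ∧ j = j2
    · rw [hc1.1, hc1.2, hSx]; left; rfl
    · by_cases hc2 : i = 2 ∧ j = j3
      · rw [hc2.1, hc2.2, hSy]; right; rfl
      · rw [hSother i j hc1 hc2]; exact hval i j h1 h2
  -- values of S in rows 1 and 2
  have hSR1 : ∀ j, mu 1 < j → j ≤ lam 1 → S 1 j = if j < j2 then 1 else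
      if j = j2 then 1 else 2 := by
    intro j h1 h2
    have := hR1 j h1 h2
    by_cases hc : j = j2
    · rw [hc, hSx]; simp
    · rw [hSother 1 j (by tauto) (by simp [hne12])]
      split_ifs at this ⊢ <;> omega
  have hSR2 : ∀ j, mu 2 < j → j ≤ lam 2 → S 2 j = if j < j3 then 1 else 2 := by
    intro j h1 h2
    have := hR2 j h1 h2
    by_cases hc : j = j3
    · rw [hc, hSy]; simp
    · rw [hSother 2 j (by simp [show ¬((2:Fin 3) = 1) by decide]) (by tauto)]
      split_ifs at this ⊢ <;> omega
  have hSR0 : ∀ j, S 0 j = T 0 j := by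
    intro j
    exact hSother 0 j (by simp [show ¬((0:Fin 3) = 1) by decide])
      (by simp [show ¬((0:Fin 3) = 2) by decide])
  -- membership of swapped cells
  have hxmem : ((1 : Fin 3), j2) ∈ skewCells lam mu := mem_skewCells.2 ⟨hj2a, hj2b⟩
  have hymem : ((2 : Fin 3), j3) ∈ skewCells lam mu := mem_skewCells.2 ⟨hj3a, hj3b⟩
  have hfg : ∀ a : Fin 3 × ℕ, a ≠ ((1 : Fin 3), j2) → a ≠ ((2 : Fin 3), j3) →
      S a.1 a.2 = T a.1 a.2 := by
    intro a h1 h2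
    apply hSother
    · intro h; exact h1 (Prod.ext h.1 h.2)
    · intro h; exact h2 (Prod.ext h.1 h.2)
  refine ⟨T, S, ⟨hzero, hpos, hrow, hcol, hwt, hyam⟩, ⟨?_, ?_, ?_, ?_, ?_, ?_⟩, ?_⟩
  · -- zero outside shape
    intro i j h
    rw [hSother i j ?_ ?_]
    · exact hzero i j h
    · intro hc; exact h (hc.1 ▸ hc.2 ▸ ⟨hj2a, hj2b⟩)
    · intro hc; exact h (hc.1 ▸ hc.2 ▸ ⟨hj3a, hj3b⟩)
  · -- positivity
    intro i j h1 h2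
    rcases hSval i j h1 h2 with h | h <;> omega
  · -- rows weakly increase
    intro i j j' h1 h2 h3 h4 hjj
    have hi : i = 0 ∨ i = 1 ∨ i = 2 := by omega
    rcases hi with hi | hi | hi <;> subst hi
    · rw [hSR0, hSR0]; exact hrow 0 j j' h1 h2 h3 h4 hjj
    · rw [hSR1 j h1 h2, hSR1 j' h3 h4]
      split_ifs <;> omega
    · rw [hSR2 j h1 h2, hSR2 j' h3 h4]
      split_ifs <;> omega
  · -- columns strictly increase (vacuous)
    intro i i' j h1 h2 h3 h4 hlt
    exact absurd (hstrip i i' j h1 h2 h3 h4) (Fin.ne_of_lt hlt)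
  · -- weight
    intro v hv
    rw [swap_card (skewCells lam mu) (fun p => T p.1 p.2) (fun p => S p.1 p.2)
      ((1 : Fin 3), j2) ((2 : Fin 3), j3) hxmem hymem (by simpa [hSx] using hj3v.symm)
      (by simpa [hSy] using hj2v.symm) hfg v]
    exact hwt v hv
  · -- Yamanouchi
    intro i j v hv
    simp only [← Finset.filter_filter]
    set s' := (skewCells lam mu).filter (fun p => p.1 < i ∨ (p.1 = i ∧ j ≤ p.2)) with hs'
    by_cases hv3 : 3 ≤ v
    · have hempty : (s'.filter fun p => S p.1 p.2 = v) = ∅ := by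
        rw [Finset.filter_eq_empty_iff]
        intro p hp
        have hps : p ∈ skewCells lam mu := (Finset.mem_filter.1 hp).1
        have := hSval p.1 p.2 (mem_skewCells.1 hps).1 (mem_skewCells.1 hps).2
        omega
      rw [hempty]
      simp
    · have hv2 : v = 2 := by omega
      subst hv2
      have hY := hyam i j 2 le_rfl
      simp only [← Finset.filter_filter] at hY
      rw [← hs'] at hY
      by_cases hyP : ((2 : Fin 3), j3) ∈ s'
      · have hxP : ((1 : Fin 3), j2) ∈ s' := by
          rw [hs', Finset.mem_filter] at hyP ⊢
          refine ⟨hxmem, ?_⟩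
          rcases hyP.2 with h | ⟨h1, _⟩
          · rw [Fin.lt_def] at h
            have := i.isLt
            simp at h
            omega
          · left
            rw [← h1]
            exact (by decide : (1 : Fin 3) < 2)
        rw [swap_card s' (fun p => T p.1 p.2) (fun p => S p.1 p.2)
          ((1 : Fin 3), j2) ((2 : Fin 3), j3) hxP hyP (by simpa [hSx] using hj3v.symm)
          (by simpa [hSy] using hj2v.symm) hfg 2,
          swap_card s' (fun p => T p.1 p.2) (fun p => S p.1 p.2)
          ((1 : Fin 3), j2) ((2 : Fin 3), j3) hxP hyP (by simpa [hSx] using hj3v.symm)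
          (by simpa [hSy] using hj2v.symm) hfg (2 - 1)]
        exact hY
      · have hsub1 : s'.filter (fun p => S p.1 p.2 = 2) ⊆
            s'.filter (fun p => T p.1 p.2 = 2) := by
          intro p hp
          rw [Finset.mem_filter] at hp ⊢
          refine ⟨hp.1, ?_⟩
          have hpx : p ≠ ((1 : Fin 3), j2) := by
            intro h
            rw [h] at hp
            simp only [hSx] at hp
            omega
          have hpy : p ≠ ((2 : Fin 3), j3) := by
            intro h
            exact hyP (h ▸ hp.1)
          rw [← hfg p hpx hpy]
          exact hp.2
        have hsub2 : s'.filter (fun p => T p.1 p.2 = 2 - 1) ⊆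
            s'.filter (fun p => S p.1 p.2 = 2 - 1) := by
          intro p hp
          rw [Finset.mem_filter] at hp ⊢
          refine ⟨hp.1, ?_⟩
          have hpx : p ≠ ((1 : Fin 3), j2) := by
            intro h
            rw [h] at hp
            simp only at hp
            rw [hj2v] at hp
            omega
          have hpy : p ≠ ((2 : Fin 3), j3) := by
            intro h
            exact hyP (h ▸ hp.1)
          rw [hfg p hpx hpy]
          exact hp.2
        calc (s'.filter fun p => S p.1 p.2 = 2).card
            ≤ (s'.filter fun p => T p.1 p.2 = 2).card := Finset.card_le_card hsub1
          _ ≤ (s'.filter fun p => T p.1 p.2 = 2 - 1).card := hY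
          _ ≤ (s'.filter fun p => S p.1 p.2 = 2 - 1).card := Finset.card_le_card hsub2
  · -- T ≠ S
    intro heq
    have := congrFun (congrFun heq 1) j2
    rw [hSx] at this
    omega
end
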